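/- Let M(x) be an n×m matrix whose entries are polynomials in ℤ[x], and let 𝐦 ∈ ℤ^n \ {0} be such that the m entries of the row vector 𝐦ᵗ(M(x) − M(0)) are linearly independent polynomials over ℤ. Then the row vector of polynomials P(x) = 𝐦ᵗM(x) has multiplicative complexity at most Q = m! · (n · ‖M(x) − M(0)‖ · ‖𝐦‖_∞)^m, where ‖M(x) − M(0)‖ denotes the largest absolute value of any polynomial coefficient appearing in any entry of M(x) − M(0). -/

import Mathlib

open Polynomial

noncomputable section

/-- `P − P(0)`, the polynomial `P` with its constant term removed. -/
def diffPart (P : Polynomial ℤ) : Polynomial ℤ := P - Polynomial.C (P.eval 0)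

/-- The `j`-th entry of the row vector `𝐦ᵗ M(x)`. -/
def rowPoly {n m : ℕ} (M : Matrix (Fin n) (Fin m) (Polynomial ℤ)) (v : Fin n → ℤ)
    (j : Fin m) : Polynomial ℤ :=
  ∑ i, Polynomial.C (v i) * M i j

/-- The largest absolute value of any polynomial coefficient appearing in any entry of a
matrix of integer polynomials. -/
def matCoeffNorm {n m : ℕ} (M : Matrix (Fin n) (Fin m) (Polynomial ℤ)) : ℕ :=
  Finset.univ.sup fun ij : Fin n × Fin m =>
    (Finset.range ((M ij.1 ij.2).natDegree + 1)).sup fun t => ((M ij.1 ij.2).coeff t).natAbs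

/-- `P(x) = [P₁(x), ..., P_r(x)]` has multiplicative complexity at most `Q`: for all
`a ∈ ℤ^r` and `q ∈ ℤ` with `gcd(a₁, ..., a_r, q) = 1`, writing
`(P(x) − P(0))·a = ∑_{t≥1} b_t x^t`, one has `gcd(b₁, ..., b_L, q) ≤ Q`. -/
def MultComplexityLE {r : ℕ} (P : Fin r → Polynomial ℤ) (Q : ℕ) : Prop :=
  ∀ (a : Fin r → ℤ) (q : ℤ), Int.gcd (Finset.univ.gcd a) q = 1 →
    (let D : Polynomial ℤ := ∑ j, Polynomial.C (a j) * diffPart (P j)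
    Int.gcd ((Finset.Icc 1 D.natDegree).gcd fun t => D.coeff t) q) ≤ Q

open Matrix

lemma diffPart_coeff_zero (P : Polynomial ℤ) : (diffPart P).coeff 0 = 0 := by
  simp [diffPart, coeff_zero_eq_eval_zero]

lemma diffPart_coeff_succ (P : Polynomial ℤ) (k : ℕ) :
    (diffPart P).coeff (k + 1) = P.coeff (k + 1) := by
  rw [diffPart, Polynomial.coeff_sub, Polynomial.coeff_C]
  simp

/-- Lemma 5 (extension of Bulinski–Fish Corollary 2.4 to non-square matrices): if the entries
of `𝐦ᵗ(M(x) − M(0))` are linearly independent over `ℤ`, then `𝐦ᵗM(x)` has multiplicative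
complexity at most `m!(n‖M(x) − M(0)‖‖𝐦‖_∞)^m`. -/
theorem mult_complexity_of_row
    (n m : ℕ) (hn : 1 ≤ n) (hm : 1 ≤ m)
    (M : Matrix (Fin n) (Fin m) (Polynomial ℤ))
    (v : Fin n → ℤ) (hv : v ≠ 0)
    (hLI : LinearIndependent ℤ fun j : Fin m => diffPart (rowPoly M v j)) :
    MultComplexityLE (rowPoly M v)
      (m.factorial *
        (n * matCoeffNorm (fun i j => diffPart (M i j)) *
          Finset.univ.sup fun i => (v i).natAbs) ^ m) := by
  intro a q hcop
  dsimp only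
  set K : ℕ := matCoeffNorm (fun i j => diffPart (M i j)) with hKdef
  set V : ℕ := Finset.univ.sup (fun i => (v i).natAbs) with hVdef
  set f : Fin m → Polynomial ℤ := fun j => diffPart (rowPoly M v j) with hfdef
  set D : Polynomial ℤ := ∑ j, Polynomial.C (a j) * f j with hD
  set g : ℕ := Int.gcd ((Finset.Icc 1 D.natDegree).gcd fun t => D.coeff t) q with hg
  -- coefficients of D
  have hcoeffD : ∀ t : ℕ, D.coeff t = ∑ j, a j * (f j).coeff t := by
    intro t
    simp [hD, Polynomial.finset_sum_coeff, Polynomial.coeff_C_mul]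
  -- coefficients of f in terms of the matrix entries
  have hfc : ∀ (j : Fin m) (t : ℕ),
      (f j).coeff t = ∑ i, v i * (diffPart (M i j)).coeff t := by
    intro j t
    cases t with
    | zero => simp [hfdef, diffPart_coeff_zero]
    | succ k =>
        simp only [hfdef, diffPart_coeff_succ, rowPoly, Polynomial.finset_sum_coeff,
          Polynomial.coeff_C_mul]
  -- degree bound
  set d : ℕ := Finset.univ.sup (fun j => (f j).natDegree) with hd
  have hdeg : ∀ j, (f j).natDegree ≤ d := by
    intro j; rw [hd]; exact Finset.le_sup (f := fun j => (f j).natDegree) (Finset.mem_univ j)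
  -- the coefficient matrix
  set A : Matrix (Fin (d + 1)) (Fin m) ℤ := Matrix.of (fun t j => (f j).coeff t) with hA
  set Aq : Matrix (Fin (d + 1)) (Fin m) ℚ := A.map Int.cast with hAq
  -- entry bounds
  have hKnat : ∀ (i : Fin n) (j : Fin m) (t : ℕ),
      ((diffPart (M i j)).coeff t).natAbs ≤ K := by
    intro i j t
    by_cases ht : t ≤ (diffPart (M i j)).natDegree
    · calc ((diffPart (M i j)).coeff t).natAbs
          ≤ (Finset.range ((diffPart (M i j)).natDegree + 1)).sup
              (fun t => ((diffPart (M i j)).coeff t).natAbs) :=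
            Finset.le_sup (f := fun t => ((diffPart (M i j)).coeff t).natAbs)
              (Finset.mem_range.mpr (by omega))
        _ ≤ K := by
            rw [hKdef]
            unfold matCoeffNorm
            have h := Finset.le_sup (f := fun ij : Fin n × Fin m =>
              (Finset.range ((diffPart (M ij.1 ij.2)).natDegree + 1)).sup
                fun t => ((diffPart (M ij.1 ij.2)).coeff t).natAbs) (Finset.mem_univ (i, j))
            simpa using h
    · rw [Polynomial.coeff_eq_zero_of_natDegree_lt (by omega)]
      simp
  have hAbound : ∀ (t : Fin (d + 1)) (j : Fin m),
      |A t j| ≤ ((n * K * V : ℕ) : ℤ) := by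
    intro t j
    have h1 : A t j = ∑ i, v i * (diffPart (M i j)).coeff (t : ℕ) := hfc j t
    rw [h1]
    calc |∑ i, v i * (diffPart (M i j)).coeff (t : ℕ)|
        ≤ ∑ i, |v i * (diffPart (M i j)).coeff (t : ℕ)| :=
          Finset.abs_sum_le_sum_abs _ _
      _ ≤ ∑ _i : Fin n, ((V : ℤ) * (K : ℤ)) := by
          refine Finset.sum_le_sum fun i _ => ?_
          rw [abs_mul]
          refine mul_le_mul ?_ ?_ (abs_nonneg _) (by positivity)
          · rw [Int.abs_eq_natAbs]
            exact_mod_cast Finset.le_sup (f := fun i => (v i).natAbs) (Finset.mem_univ i)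
          · rw [Int.abs_eq_natAbs]
            exact_mod_cast hKnat i j t
      _ = ((n * K * V : ℕ) : ℤ) := by
          rw [Finset.sum_const, Finset.card_univ, Fintype.card_fin]
          push_cast
          ring
  -- linear independence of columns over ℚ
  have hLIZ : LinearIndependent ℤ (fun j => Aqᵀ j) := by
    rw [Fintype.linearIndependent_iff]
    intro c hc
    have hcz : ∀ t : Fin (d + 1), ∑ j, c j * A t j = 0 := by
      intro t
      have h2 := congr_fun hc t
      simp only [Finset.sum_apply, Pi.smul_apply, Pi.zero_apply, Matrix.transpose_apply,
        hAq, Matrix.map_apply] at h2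
      simp only [zsmul_eq_mul] at h2
      exact_mod_cast h2
    have hp : ∑ j, c j • f j = 0 := by
      apply Polynomial.ext
      intro t
      rw [Polynomial.finset_sum_coeff]
      simp only [Polynomial.coeff_smul, smul_eq_mul, Polynomial.coeff_zero]
      by_cases ht : t ≤ d
      · exact hcz ⟨t, by omega⟩
      · refine Finset.sum_eq_zero fun j _ => ?_
        rw [Polynomial.coeff_eq_zero_of_natDegree_lt (lt_of_le_of_lt (hdeg j) (by omega))]
        ring
    exact Fintype.linearIndependent_iff.mp hLI c hp
  have hLIQ : LinearIndependent ℚ (fun j => Aqᵀ j) :=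
    (LinearIndependent.iff_fractionRing ℤ ℚ).mp hLIZ
  -- the rows of Aq span ℚ^m
  have hinj : Function.Injective Aq.mulVecLin := by
    rw [Matrix.coe_mulVecLin]
    exact Matrix.mulVec_injective_iff.mpr hLIQ
  have hrank : Aq.rank = m := by
    rw [Matrix.rank, LinearMap.finrank_range_of_inj hinj, Module.finrank_fin_fun]
  have hspan : Submodule.span ℚ (Set.range (fun t : Fin (d + 1) => Aq t)) = ⊤ := by
    apply Submodule.eq_top_of_finrank_eq
    have h3 := Aq.rank_eq_finrank_span_row
    rw [hrank] at h3
    rw [Module.finrank_fin_fun]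
    exact h3.symm
  obtain ⟨b, hbsub, hbspan, hbLI⟩ :=
    exists_linearIndependent ℚ (Set.range (fun t : Fin (d + 1) => Aq t))
  have hbfin : b.Finite := (Set.finite_range _).subset hbsub
  haveI := hbfin.fintype
  have hbtop : ⊤ ≤ Submodule.span ℚ (Set.range ((↑) : b → (Fin m → ℚ))) := by
    rw [Subtype.range_coe, hbspan, hspan]
  let bas : Module.Basis b ℚ (Fin m → ℚ) := Module.Basis.mk hbLI hbtop
  have hcard : Fintype.card b = m := by
    have := Module.finrank_eq_card_basis bas
    rw [Module.finrank_fin_fun] at this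
    omega
  let e : Fin m ≃ b := (Fintype.equivFinOfCardEq hcard).symm
  have hex : ∀ i : Fin m, ∃ t, Aq t = ((e i : _) : Fin m → ℚ) := fun i => hbsub (e i).2
  set r : Fin m → Fin (d + 1) := fun i => (hex i).choose with hrdef
  have hre : ∀ i, Aq (r i) = ((e i : _) : Fin m → ℚ) := fun i => (hex i).choose_spec
  have hrinj : Function.Injective r := by
    intro i i' h
    apply e.injective
    apply Subtype.ext
    rw [← hre, ← hre, h]
  set B : Matrix (Fin m) (Fin m) ℚ := Aq.submatrix r id with hB
  have hBrows : (fun i => B i) = ((↑) : b → (Fin m → ℚ)) ∘ e := by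
    funext i
    ext j
    exact congr_fun (hre i) j
  have hBLI : LinearIndependent ℚ (fun i => B i) := by
    rw [hBrows]
    exact hbLI.comp e e.injective
  have hBdet : B.det ≠ 0 :=
    ((Matrix.isUnit_iff_isUnit_det B).mp
      (Matrix.linearIndependent_rows_iff_isUnit.mp hBLI)).ne_zero
  set Bz : Matrix (Fin m) (Fin m) ℤ := A.submatrix r id with hBz
  have hcast : ((Bz.det : ℤ) : ℚ) = B.det := by
    rw [show ((Bz.det : ℤ) : ℚ) = (Int.castRingHom ℚ) Bz.det from rfl, RingHom.map_det]
    congr 1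
  have hBzdet : Bz.det ≠ 0 := by
    intro h0
    apply hBdet
    rw [← hcast, h0, Int.cast_zero]
  -- Cramer's rule
  have hkey : ∀ j, Bz.det * a j = ∑ i, Bz.adjugate j i * D.coeff ((r i : ℕ)) := by
    have h1 : Bz.adjugate *ᵥ (Bz *ᵥ a) = Bz.det • a := by
      rw [Matrix.mulVec_mulVec, Matrix.adjugate_mul, Matrix.smul_mulVec,
        Matrix.one_mulVec]
    have h2 : ∀ i, (Bz *ᵥ a) i = D.coeff ((r i : ℕ)) := by
      intro i
      rw [hcoeffD]
      simp only [Matrix.mulVec, dotProduct, hBz, Matrix.submatrix_apply, id_eq, hA,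
        Matrix.of_apply]
      exact Finset.sum_congr rfl fun j _ => mul_comm _ _
    intro j
    have h3 := congr_fun h1 j
    simp only [Matrix.mulVec, dotProduct, Pi.smul_apply, smul_eq_mul] at h3
    rw [← h3]
    exact Finset.sum_congr rfl fun i _ => by rw [← h2 i]; rfl
  -- divisibility
  have hdvd : ∀ t : ℕ, (g : ℤ) ∣ D.coeff t := by
    intro t
    rcases Nat.eq_zero_or_pos t with ht0 | htpos
    · subst ht0
      rw [hcoeffD]
      have : ∀ j : Fin m, (f j).coeff 0 = 0 := fun j => diffPart_coeff_zero _
      simp [this]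
    · by_cases htd : t ≤ D.natDegree
      · exact dvd_trans (by rw [hg]; exact Int.gcd_dvd_left _ _ : (g:ℤ) ∣ _)
          (Finset.gcd_dvd (Finset.mem_Icc.mpr ⟨htpos, htd⟩))
      · rw [Polynomial.coeff_eq_zero_of_natDegree_lt (by omega)]
        exact dvd_zero _
  have hdvddet : (g : ℤ) ∣ Bz.det := by
    have h3 : ∀ j, (g : ℤ) ∣ Bz.det * a j := by
      intro j
      rw [hkey j]
      exact Finset.dvd_sum fun i _ => (hdvd _).mul_left _
    have h4 : (g : ℤ) ∣ Finset.univ.gcd (fun j => Bz.det * a j) :=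
      Finset.dvd_gcd fun j _ => h3 j
    rw [Finset.gcd_mul_left] at h4
    have hcop2 : IsCoprime ((Finset.univ.gcd a : ℤ)) ((g : ℤ)) := by
      have h5 : IsCoprime ((Finset.univ.gcd a : ℤ)) q := Int.isCoprime_iff_gcd_eq_one.mpr hcop
      exact h5.of_isCoprime_of_dvd_right (by rw [hg]; exact Int.gcd_dvd_right _ _)
    have h6 : (g : ℤ) ∣ normalize Bz.det :=
      hcop2.symm.dvd_of_dvd_mul_right h4
    exact h6.trans (normalize_associated _).dvd
  -- determinant bound
  have hboundB : |Bz.det| ≤ ((m.factorial * (n * K * V) ^ m : ℕ) : ℤ) := by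
    have hx : ∀ i j, |Bz i j| ≤ ((n * K * V : ℕ) : ℤ) := fun i j => hAbound (r i) j
    have h7 := Matrix.det_le (A := Bz) (abv := AbsoluteValue.abs) (x := ((n * K * V : ℕ) : ℤ))
      (fun i j => hx i j)
    simp only [Fintype.card_fin, nsmul_eq_mul, AbsoluteValue.abs_apply] at h7
    calc |Bz.det| ≤ (m.factorial : ℤ) * ((n * K * V : ℕ) : ℤ) ^ m := h7
      _ = ((m.factorial * (n * K * V) ^ m : ℕ) : ℤ) := by push_cast; ring
  -- conclusion
  have hfin : (g : ℤ) ≤ ((m.factorial * (n * K * V) ^ m : ℕ) : ℤ) :=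
    le_trans (Int.le_of_dvd (abs_pos.mpr hBzdet) ((dvd_abs _ _).mpr hdvddet)) hboundB
  exact_mod_cast hfin
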